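/- arXiv:1605.08460 — 3 statements merged into one kernel-verified Lean document; each statement's English description precedes it below -/
import Mathlib

section
/- Let a₁, a₂, a₃, a₄, b be Boolean variables, A = a₁ ∨ a₂ ∨ a₃ ∨ a₄, and A¬ = ¬a₁ ∨ ¬a₂ ∨ ¬a₃ ∨ ¬a₄. Let B = (a₁ ∨ a₂ ∨ b) ∧ (¬a₁ ∨ ¬a₂ ∨ ¬b) ∧ (¬b ∨ a₃ ∨ a₄) ∧ (b ∨ ¬a₃ ∨ ¬a₄). Then an assignment (a₁,a₂,a₃,a₄) satisfies A ∧ A¬ if and only if there exists a Boolean value b such that (a₁,a₂,a₃,a₄,b) satisfies B. -/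
theorem stmt_4 (a₁ a₂ a₃ a₄ : Bool) :
    ((a₁ || a₂ || a₃ || a₄) && (!a₁ || !a₂ || !a₃ || !a₄)) = true ↔
      ∃ b : Bool,
        ((a₁ || a₂ || b) && (!a₁ || !a₂ || !b) &&
         (!b || a₃ || a₄) && (b || !a₃ || !a₄)) = true := by
  constructor
  · intro h; cases a₁ <;> cases a₂ <;> cases a₃ <;> cases a₄ <;> simp_all <;> first | exact ⟨true, rfl⟩ | exact ⟨false, rfl⟩
  · rintro ⟨b, h⟩; revert h; cases a₁ <;> cases a₂ <;> cases a₃ <;> cases a₄ <;> cases b <;> simp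
end

section
/- If the underlying undirected multigraph of a DADG G is a forest (contains no cycles), then G is gradable. -/
/-- A digital arrowed daisy graph (DADG): a finite directed multigraph whose vertices
have degree 1 or 6.  An edge end is a pair `(e, s)` where `s = false` is the beginning of
`e` and `s = true` is its ending.  Each degree-6 vertex (triple value) carries a pairing
of its six incident edge-ends into three arc segments, with exactly one end of each pair
marked as preferred. -/
structure DADG where
  /-- the type of edges -/
  E : Type
  /-- the type of vertices -/
  V : Type
  fintypeE : Fintype E
  fintypeV : Fintype V
  /-- the vertex on which an edge-end lies -/
  endVertex : E × Bool → V
  /-- the degree-6 vertices (triple values) -/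
  isTriple : V → Prop
  /-- the marking of edge-ends as preferred -/
  preferred : E × Bool → Prop
  /-- every vertex has degree 6 (a triple value) or degree 1 -/
  degree_eq : ∀ v, (isTriple v → Nat.card {x : E × Bool // endVertex x = v} = 6) ∧
    (¬ isTriple v → Nat.card {x : E × Bool // endVertex x = v} = 1)
  /-- only ends lying on triple values can be preferred -/
  preferred_triple : ∀ x, preferred x → isTriple (endVertex x)
  /-- the pairing of the ends at each triple value into arc segments -/
  segPair : E × Bool → E × Bool
  segPair_vertex : ∀ x, isTriple (endVertex x) → endVertex (segPair x) = endVertex x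
  segPair_involutive : ∀ x, isTriple (endVertex x) → segPair (segPair x) = x
  segPair_ne : ∀ x, isTriple (endVertex x) → segPair x ≠ x
  /-- exactly one end of each arc segment is preferred -/
  segPair_preferred : ∀ x, isTriple (endVertex x) → (preferred x ↔ ¬ preferred (segPair x))

namespace DADG

variable (G : DADG)

/-- A grading of a DADG: at each triple value, all edges with a preferred end there
share a common grade, all edges with a non-preferred end there share a common grade,
and the former is one greater than the latter. -/
def IsGrading (g : G.E → ℤ) : Prop :=
  ∀ v, G.isTriple v → ∀ x y : G.E × Bool, G.endVertex x = v → G.endVertex y = v →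
    ((G.preferred x ∧ G.preferred y) → g x.1 = g y.1) ∧
    ((¬ G.preferred x ∧ ¬ G.preferred y) → g x.1 = g y.1) ∧
    ((G.preferred x ∧ ¬ G.preferred y) → g x.1 = g y.1 + 1)

/-- An edge is a grade-obstructing loop if both of its ends lie on the same (triple)
vertex, with one end preferred and the other non-preferred. -/
def GradeObstructingLoop (e : G.E) : Prop :=
  ∃ v, G.isTriple v ∧ G.endVertex (e, false) = v ∧ G.endVertex (e, true) = v ∧
    (G.preferred (e, false) ↔ ¬ G.preferred (e, true))

end DADG

namespace DADG

variable (G : DADG)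

/-- A closed walk of positive length in the underlying undirected multigraph of a
DADG, using pairwise distinct edges (i.e., a cycle). -/
def IsCycleWalk (r : ℕ) (edges : ℕ → G.E) (verts : ℕ → G.V) : Prop :=
  0 < r ∧ verts r = verts 0 ∧
    (∀ k < r,
      (G.endVertex (edges k, false) = verts k ∧ G.endVertex (edges k, true) = verts (k + 1)) ∨
      (G.endVertex (edges k, true) = verts k ∧ G.endVertex (edges k, false) = verts (k + 1))) ∧
    (∀ i < r, ∀ j < r, i ≠ j → edges i ≠ edges j)

/-- The underlying undirected multigraph of the DADG is a forest: it contains no cycle. -/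
def IsForest : Prop :=
  ¬ ∃ (r : ℕ) (edges : ℕ → G.E) (verts : ℕ → G.V), G.IsCycleWalk r edges verts

end DADG

open Classical

/-- No-cycle condition for an abstract multigraph with edge type β, vertex type α. -/
def NoCyc {β α : Type} (a b : β → α) : Prop :=
  ¬ ∃ (r : ℕ) (ed : ℕ → β) (vs : ℕ → α), 0 < r ∧ vs r = vs 0 ∧
    (∀ k < r, (a (ed k) = vs k ∧ b (ed k) = vs (k+1)) ∨
              (b (ed k) = vs k ∧ a (ed k) = vs (k+1))) ∧
    (∀ i < r, ∀ j < r, i ≠ j → ed i ≠ ed j)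

theorem potential_exists : ∀ (n : ℕ) (β α : Type) [Fintype β] (a b : β → α) (d : β → ℤ),
    Fintype.card β = n → NoCyc a b →
    ∃ f : α → ℤ, ∀ e, f (a e) = f (b e) + d e := by
  intro n
  induction n with
  | zero =>
    intro β α _ a b d hcard _
    have : IsEmpty β := Fintype.card_eq_zero_iff.mp hcard
    exact ⟨fun _ => 0, fun e => (this.false e).elim⟩
  | succ n ih =>
    intro β α _ a b d hcard hnc
    obtain ⟨e0⟩ : Nonempty β := Fintype.card_pos_iff.mp (by omega)
    -- the graph without e0
    have hcard' : Fintype.card {e : β // e ≠ e0} = n := by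
      have h2 := Fintype.card_subtype_compl (fun e : β => e = e0)
      rw [Fintype.card_subtype_eq, hcard] at h2
      have : Fintype.card {e : β // ¬ e = e0} = Fintype.card {e : β // e ≠ e0} := by
        convert rfl
      omega
    have hnc' : NoCyc (fun e : {e : β // e ≠ e0} => a e.1) (fun e => b e.1) := by
      rintro ⟨r, ed, vs, hr, hcl, hstep, hdis⟩
      exact hnc ⟨r, fun k => (ed k).1, vs, hr, hcl, hstep,
        fun i hi j hj hij hEq => hdis i hi j hj hij (Subtype.ext hEq)⟩
    obtain ⟨f', hf'⟩ := ih {e : β // e ≠ e0} α (fun e => a e.1) (fun e => b e.1)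
      (fun e => d e.1) hcard' hnc'
    -- reachability avoiding e0
    let rel : α → α → Prop := fun u v => ∃ e : β, e ≠ e0 ∧
      ((a e = u ∧ b e = v) ∨ (a e = v ∧ b e = u))
    have hrelsymm : Symmetric rel := by
      rintro u v ⟨e, hne, h | h⟩
      · exact ⟨e, hne, Or.inr h⟩
      · exact ⟨e, hne, Or.inl h⟩
    -- reach gives a walk avoiding e0
    have walk_of_reach : ∀ u v, Relation.ReflTransGen rel u v →
        ∃ (m : ℕ) (vs : ℕ → α) (ed : ℕ → β),
        vs 0 = u ∧ vs m = v ∧ ∀ k < m, ed k ≠ e0 ∧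
          ((a (ed k) = vs k ∧ b (ed k) = vs (k+1)) ∨
           (b (ed k) = vs k ∧ a (ed k) = vs (k+1))) := by
      intro u v h
      induction h with
      | refl => exact ⟨0, fun _ => u, fun _ => e0, rfl, rfl, by omega⟩
      | @tail p q hr hstep ihw =>
        obtain ⟨m, vs, ed, h0, hm, hstp⟩ := ihw
        obtain ⟨e, hene, hcase⟩ := hstep
        refine ⟨m + 1, fun k => if k = m + 1 then q else vs k,
          fun k => if k = m then e else ed k, by simp [h0], by simp, ?_⟩
        intro k hk
        dsimp only
        rcases Nat.lt_succ_iff_lt_or_eq.mp hk with hk' | hk'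
        · have h1 : k ≠ m := by omega
          have h2 : k ≠ m + 1 := by omega
          have h3 : k + 1 ≠ m + 1 := by omega
          simpa [h1, h2, h3] using hstp k hk'
        · rw [if_pos hk', if_neg (by omega : k ≠ m + 1), if_pos (by omega : k + 1 = m + 1),
            hk', hm]
          refine ⟨hene, ?_⟩
          rcases hcase with ⟨h1, h2'⟩ | ⟨h1, h2'⟩
          · exact Or.inl ⟨h1, h2'⟩
          · exact Or.inr ⟨h2', h1⟩
    -- key: b e0 not reachable from a e0 without e0
    have hkey : ¬ Relation.ReflTransGen rel (a e0) (b e0) := by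
      intro hr
      have hex : ∃ m, ∃ (vs : ℕ → α) (ed : ℕ → β),
          vs 0 = a e0 ∧ vs m = b e0 ∧ ∀ k < m, ed k ≠ e0 ∧
            ((a (ed k) = vs k ∧ b (ed k) = vs (k+1)) ∨
             (b (ed k) = vs k ∧ a (ed k) = vs (k+1))) := walk_of_reach _ _ hr
      obtain ⟨vs, ed, h0, hm, hstp⟩ := Nat.find_spec hex
      set m := Nat.find hex with hmdef
      -- minimal walk has injective vertices on [0, m]
      have hinj : ∀ i ≤ m, ∀ j ≤ m, vs i = vs j → i = j := by
        have hshort : ∀ i j, i < j → j ≤ m → vs i = vs j → False := by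
          intro i j hij hjm heq
          have hlt : m - (j - i) < m := by omega
          apply Nat.find_min hex hlt
          set D := j - i with hD
          have hDm : D ≤ m := by omega
          have hvs' : ∀ k, i ≤ k → (if k ≤ i then vs k else vs (k + D)) = vs (k + D) := by
            intro k hk
            by_cases hki : k ≤ i
            · have : k = i := by omega
              rw [if_pos hki, this, heq]
              congr 1
              omega
            · rw [if_neg hki]
          refine ⟨fun k => if k ≤ i then vs k else vs (k + D),
            fun k => if k < i then ed k else ed (k + D), by simp [h0], ?_, ?_⟩
          · have h1 : i ≤ m - D := by omega
            show (if m - D ≤ i then vs (m - D) else vs (m - D + D)) = b e0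
            rw [hvs' _ h1]
            have : m - D + D = m := by omega
            rw [this, hm]
          · intro k hk
            dsimp only
            by_cases hki : k < i
            · have h1 : k ≤ i := by omega
              have h2 : k + 1 ≤ i := by omega
              rw [if_pos hki, if_pos h1, if_pos h2]
              exact hstp k (by omega)
            · rw [if_neg hki, hvs' k (by omega), hvs' (k + 1) (by omega)]
              have he : k + 1 + D = k + D + 1 := by omega
              rw [he]
              exact hstp (k + D) (by omega)
        intro i hi j hj heq
        rcases lt_trichotomy i j with h | h | h
        · exact absurd heq (fun heq => hshort i j h hj heq)
        · exact h
        · exact absurd heq.symm (fun heq => hshort j i h hi heq)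
      -- now build a cycle, contradiction
      apply hnc
      refine ⟨m + 1, fun k => if k = m then e0 else ed k,
        fun k => if k = m + 1 then a e0 else vs k, by omega, by simp [h0], ?_, ?_⟩
      · intro k hk
        dsimp only
        rcases Nat.lt_succ_iff_lt_or_eq.mp hk with hk' | hk'
        · have h1 : k ≠ m := by omega
          have h2 : k ≠ m + 1 := by omega
          have h3 : k + 1 ≠ m + 1 := by omega
          simpa [h1, h2, h3] using (hstp k hk').2
        · rw [if_pos hk', if_neg (by omega : k ≠ m + 1), if_pos (by omega : k + 1 = m + 1),
            hk']
          exact Or.inr ⟨hm.symm, rfl⟩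
      · -- distinct edges
        have main : ∀ i j, i < j → j < m + 1 →
            (if i = m then e0 else ed i) ≠ (if j = m then e0 else ed j) := by
          intro i j hij hj
          have hi : i < m := by omega
          rw [if_neg (by omega : i ≠ m)]
          by_cases hjm : j = m
          · rw [if_pos hjm]
            exact (hstp i hi).1
          · rw [if_neg hjm]
            have hjm' : j < m := by omega
            intro heq
            have hsi := (hstp i hi).2
            have hsj := (hstp j hjm').2
            rw [heq] at hsi
            rcases hsi with ⟨hi1, hi2⟩ | ⟨hi1, hi2⟩ <;>
              rcases hsj with ⟨hj1, hj2⟩ | ⟨hj1, hj2⟩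
            · have := hinj i (by omega) j (by omega) (by rw [← hi1, hj1])
              omega
            · have := hinj i (by omega) (j+1) (by omega) (by rw [← hi1, hj2])
              omega
            · have := hinj i (by omega) (j+1) (by omega) (by rw [← hi1, hj2])
              omega
            · have := hinj i (by omega) j (by omega) (by rw [← hi1, hj1])
              omega
        intro i hi j hj hij
        rcases lt_trichotomy i j with h | h | h
        · exact main i j h hj
        · exact absurd h hij
        · exact (main j i h hi).symm
    -- construct the potential
    set c : ℤ := f' (b e0) + d e0 - f' (a e0) with hc
    refine ⟨fun v => f' v + if Relation.ReflTransGen rel (a e0) v then c else 0, ?_⟩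
    intro e
    dsimp only
    by_cases he : e = e0
    · rw [he, if_pos Relation.ReflTransGen.refl, if_neg hkey]
      ring
    · have hcon : Relation.ReflTransGen rel (a e0) (a e) ↔
          Relation.ReflTransGen rel (a e0) (b e) := by
        have hr : rel (a e) (b e) := ⟨e, he, Or.inl ⟨rfl, rfl⟩⟩
        exact ⟨fun h => h.tail hr, fun h => h.tail (hrelsymm hr)⟩
      have hfe := hf' ⟨e, he⟩
      simp only at hfe
      by_cases hra : Relation.ReflTransGen rel (a e0) (a e)
      · rw [if_pos hra, if_pos (hcon.mp hra)]
        omega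
      · rw [if_neg hra, if_neg (fun h => hra (hcon.mpr h))]
        omega

open Classical in
/-- If the underlying undirected multigraph of a DADG is a forest, then the DADG
is gradable. -/
theorem stmt_15 (G : DADG) (h : G.IsForest) : ∃ g, G.IsGrading g := by
  haveI := G.fintypeE
  haveI := G.fintypeV
  -- the edges with both ends at triple vertices
  let β := {e : G.E // G.isTriple (G.endVertex (e, false)) ∧ G.isTriple (G.endVertex (e, true))}
  let δ : G.E × Bool → ℤ := fun x => if G.preferred x then 0 else -1
  let a : β → G.V := fun e => G.endVertex (e.1, false)
  let b : β → G.V := fun e => G.endVertex (e.1, true)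
  have hnc : NoCyc a b := by
    rintro ⟨r, ed, vs, hr, hcl, hstep, hdis⟩
    exact h ⟨r, fun k => (ed k).1, vs, hr, hcl, hstep,
      fun i hi j hj hij hEq => hdis i hi j hj hij (Subtype.ext hEq)⟩
  obtain ⟨f, hf⟩ := potential_exists (Fintype.card β) β G.V a b
    (fun e => δ (e.1, true) - δ (e.1, false)) rfl hnc
  refine ⟨fun e => if G.isTriple (G.endVertex (e, false)) then
      f (G.endVertex (e, false)) + δ (e, false)
    else if G.isTriple (G.endVertex (e, true)) then
      f (G.endVertex (e, true)) + δ (e, true)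
    else 0, ?_⟩
  have key : ∀ x : G.E × Bool, G.isTriple (G.endVertex x) →
      (if G.isTriple (G.endVertex (x.1, false)) then
        f (G.endVertex (x.1, false)) + δ (x.1, false)
      else if G.isTriple (G.endVertex (x.1, true)) then
        f (G.endVertex (x.1, true)) + δ (x.1, true)
      else 0) = f (G.endVertex x) + δ x := by
    rintro ⟨e, s⟩ hT
    cases s with
    | false => rw [if_pos hT]
    | true =>
      by_cases hT0 : G.isTriple (G.endVertex (e, false))
      · rw [if_pos hT0]
        have := hf ⟨e, hT0, hT⟩
        simp only [a, b] at this
        rw [this]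
        ring
      · rw [if_neg hT0, if_pos hT]
  intro v hv x y hx hy
  have hkx := key x (hx ▸ hv)
  have hky := key y (hy ▸ hv)
  rw [hx] at hkx
  rw [hy] at hky
  refine ⟨?_, ?_, ?_⟩ <;> rintro ⟨hpx, hpy⟩ <;> dsimp only <;> rw [hkx, hky] <;>
    simp [δ, hpx, hpy]
end

section
/- In a height-1 DADG whose double arcs are indexed DA₀, …, DA_{N−1}, for every j the number of arc segments on DA_j whose parameter s'(k,l) equals 1 is equal to the number whose parameter equals 0, and both are equal to the number of preferred edges on DA_j and to the number of non-preferred edges on DA_j. -/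
/-- A concrete DADG with no branch or DB values: `nE` edges, `T` triple values, and for
each triple value `k` and each `l : Fin 3` an arc segment `seg k l`, a pair of edge-ends
whose second member is the preferred end.  An edge-end is a pair `(r, s)` with `r` the
index of the edge and `s = false`/`true` for the beginning/ending of the edge. -/
structure CDADG where
  nE : ℕ
  T : ℕ
  seg : Fin T → Fin 3 → (Fin nE × Bool) × (Fin nE × Bool)
  /-- one end of each arc segment is a beginning and the other is an ending -/
  opp : ∀ k l, (seg k l).1.2 = !((seg k l).2.2)
  /-- every edge-end lies on exactly one arc segment -/
  valid : ∀ x : Fin nE × Bool, ∃! p : Fin T × Fin 3,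
    x = (seg p.1 p.2).1 ∨ x = (seg p.1 p.2).2

namespace CDADG

variable (G : CDADG)

/-- An edge-end is preferred if it is the preferred (second) end of some arc segment. -/
def PrefEnd (x : Fin G.nE × Bool) : Prop := ∃ k l, (G.seg k l).2 = x

/-- An edge is preferred if both of its ends are preferred. -/
def PrefEdge (r : Fin G.nE) : Prop := G.PrefEnd (r, false) ∧ G.PrefEnd (r, true)

/-- An edge is non-preferred if neither of its ends is preferred. -/
def NonPrefEdge (r : Fin G.nE) : Prop := ¬ G.PrefEnd (r, false) ∧ ¬ G.PrefEnd (r, true)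

/-- A height-1 DADG: at least one triple value and every edge is preferred or
non-preferred. -/
def Height1 : Prop := 0 < G.T ∧ ∀ r, G.PrefEdge r ∨ G.NonPrefEdge r

/-- Two edges are consecutive if they carry the two ends of a common arc segment. -/
def Consec (r₁ r₂ : Fin G.nE) : Prop :=
  ∃ k l, (G.seg k l).1.1 = r₁ ∧ (G.seg k l).2.1 = r₂

/-- Two edges lie on the same double arc: the equivalence closure of consecutiveness. -/
def SameArc (r₁ r₂ : Fin G.nE) : Prop := Relation.EqvGen G.Consec r₁ r₂

/-- The arc segment `(k, l)` lies on the double arc of the edge `e`. -/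
def SegOnArc (e : Fin G.nE) (p : Fin G.T × Fin 3) : Prop :=
  G.SameArc e (G.seg p.1 p.2).1.1

/-- The parameter `s'(k, l)` of an arc segment: the flag of its non-preferred end. -/
def s' (p : Fin G.T × Fin 3) : Bool := (G.seg p.1 p.2).1.2

end CDADG

namespace CDADG

variable (G : CDADG)

lemma seg_unique {x : Fin G.nE × Bool} {p q : Fin G.T × Fin 3}
    (hp : x = (G.seg p.1 p.2).1 ∨ x = (G.seg p.1 p.2).2)
    (hq : x = (G.seg q.1 q.2).1 ∨ x = (G.seg q.1 q.2).2) : p = q := by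
  obtain ⟨u, _, hu⟩ := G.valid x
  rw [hu p hp, hu q hq]

lemma ends_ne (p : Fin G.T × Fin 3) : (G.seg p.1 p.2).1 ≠ (G.seg p.1 p.2).2 := by
  intro hEq
  have h1 := G.opp p.1 p.2
  rw [hEq] at h1
  simp at h1

lemma not_pref_first (p : Fin G.T × Fin 3) : ¬ G.PrefEnd (G.seg p.1 p.2).1 := by
  rintro ⟨k, l, hkl⟩
  have hpq : (⟨k, l⟩ : Fin G.T × Fin 3) = p :=
    G.seg_unique (Or.inr hkl.symm) (Or.inl rfl)
  subst hpq
  exact G.ends_ne ⟨k, l⟩ hkl.symm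

lemma second_flag {p : Fin G.T × Fin 3} {b : Bool} (hb : G.s' p = b) :
    (G.seg p.1 p.2).2.2 = !b := by
  have h1 := G.opp p.1 p.2
  unfold CDADG.s' at hb
  rw [hb] at h1
  cases b <;> simp_all

lemma pref_second (h : G.Height1) (p : Fin G.T × Fin 3) :
    G.PrefEdge (G.seg p.1 p.2).2.1 := by
  rcases h.2 (G.seg p.1 p.2).2.1 with hP | hN
  · exact hP
  · exfalso
    have hpe : G.PrefEnd ((G.seg p.1 p.2).2.1, (G.seg p.1 p.2).2.2) :=
      ⟨p.1, p.2, by rw [Prod.mk.eta]⟩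
    cases hb : (G.seg p.1 p.2).2.2
    · rw [hb] at hpe; exact hN.1 hpe
    · rw [hb] at hpe; exact hN.2 hpe

lemma nonpref_first (h : G.Height1) (p : Fin G.T × Fin 3) :
    G.NonPrefEdge (G.seg p.1 p.2).1.1 := by
  rcases h.2 (G.seg p.1 p.2).1.1 with hP | hN
  · exfalso
    have hne : ¬ G.PrefEnd ((G.seg p.1 p.2).1.1, (G.seg p.1 p.2).1.2) := by
      rw [Prod.mk.eta]; exact G.not_pref_first p
    cases hb : (G.seg p.1 p.2).1.2
    · rw [hb] at hne; exact hne hP.1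
    · rw [hb] at hne; exact hne hP.2
  · exact hN

lemma arc_second_iff (e : Fin G.nE) (p : Fin G.T × Fin 3) :
    G.SameArc e (G.seg p.1 p.2).2.1 ↔ G.SameArc e (G.seg p.1 p.2).1.1 := by
  have hc : G.Consec (G.seg p.1 p.2).1.1 (G.seg p.1 p.2).2.1 := ⟨p.1, p.2, rfl, rfl⟩
  constructor
  · intro hh
    exact Relation.EqvGen.trans _ _ _ hh
      (Relation.EqvGen.symm _ _ (Relation.EqvGen.rel _ _ hc))
  · intro hh
    exact Relation.EqvGen.trans _ _ _ hh (Relation.EqvGen.rel _ _ hc)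

lemma card_pref (h : G.Height1) (e : Fin G.nE) (b : Bool) :
    Nat.card {p : Fin G.T × Fin 3 // G.SegOnArc e p ∧ G.s' p = b} =
      Nat.card {f : Fin G.nE // G.SameArc e f ∧ G.PrefEdge f} := by
  apply Nat.card_congr
  refine Equiv.ofBijective
    (fun p => ⟨(G.seg p.1.1 p.1.2).2.1,
      (G.arc_second_iff e p.1).mpr p.2.1, G.pref_second h p.1⟩) ⟨?_, ?_⟩
  · rintro ⟨p₁, hp₁, hb₁⟩ ⟨p₂, hp₂, hb₂⟩ hEq
    simp only [Subtype.mk.injEq] at hEq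
    have h2₁ := G.second_flag hb₁
    have h2₂ := G.second_flag hb₂
    have hends : (G.seg p₁.1 p₁.2).2 = (G.seg p₂.1 p₂.2).2 := by
      apply Prod.ext hEq (h2₁.trans h2₂.symm)
    exact Subtype.ext (G.seg_unique (Or.inr rfl) (Or.inr hends))
  · rintro ⟨f, harc, hpref⟩
    have hpe : G.PrefEnd (f, !b) := by
      cases b
      · exact hpref.2
      · exact hpref.1
    obtain ⟨k, l, hkl⟩ := hpe
    have hs : G.s' ⟨k, l⟩ = b := by
      unfold CDADG.s'
      rw [G.opp k l, hkl]
      simp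
    have hf : (G.seg k l).2.1 = f := by rw [hkl]
    have hon : G.SegOnArc e ⟨k, l⟩ := by
      have : G.SameArc e (G.seg k l).2.1 := by rw [hf]; exact harc
      exact (G.arc_second_iff e ⟨k, l⟩).mp this
    exact ⟨⟨⟨k, l⟩, hon, hs⟩, Subtype.ext hf⟩

lemma card_nonpref (h : G.Height1) (e : Fin G.nE) (b : Bool) :
    Nat.card {p : Fin G.T × Fin 3 // G.SegOnArc e p ∧ G.s' p = b} =
      Nat.card {f : Fin G.nE // G.SameArc e f ∧ G.NonPrefEdge f} := by
  apply Nat.card_congr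
  refine Equiv.ofBijective
    (fun p => ⟨(G.seg p.1.1 p.1.2).1.1, p.2.1, G.nonpref_first h p.1⟩) ⟨?_, ?_⟩
  · rintro ⟨p₁, hp₁, hb₁⟩ ⟨p₂, hp₂, hb₂⟩ hEq
    simp only [Subtype.mk.injEq] at hEq
    have hends : (G.seg p₁.1 p₁.2).1 = (G.seg p₂.1 p₂.2).1 :=
      Prod.ext hEq (hb₁.trans hb₂.symm)
    exact Subtype.ext (G.seg_unique (Or.inl rfl) (Or.inl hends))
  · rintro ⟨f, harc, hnon⟩
    obtain ⟨p, hp, _⟩ := G.valid (f, b)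
    have hfirst : (f, b) = (G.seg p.1 p.2).1 := by
      rcases hp with h1 | h2
      · exact h1
      · exfalso
        have : G.PrefEnd (f, b) := ⟨p.1, p.2, h2.symm⟩
        cases b
        · exact hnon.1 this
        · exact hnon.2 this
    have hf : (G.seg p.1 p.2).1.1 = f := by rw [← hfirst]
    have hs : G.s' p = b := by
      unfold CDADG.s'; rw [← hfirst]
    have hon : G.SegOnArc e p := by
      unfold CDADG.SegOnArc; rw [hf]; exact harc
    exact ⟨⟨p, hon, hs⟩, Subtype.ext hf⟩

end CDADG


/-- In a height-1 DADG, on each double arc the number of arc segments with parameter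
`s' = 1` equals the number with `s' = 0`, and both equal the number of preferred edges
on the arc and the number of non-preferred edges on the arc. -/
theorem stmt_16 (G : CDADG) (h : G.Height1) (e : Fin G.nE) :
    Nat.card {p : Fin G.T × Fin 3 // G.SegOnArc e p ∧ G.s' p = true} =
      Nat.card {p : Fin G.T × Fin 3 // G.SegOnArc e p ∧ G.s' p = false} ∧
    Nat.card {p : Fin G.T × Fin 3 // G.SegOnArc e p ∧ G.s' p = true} =
      Nat.card {f : Fin G.nE // G.SameArc e f ∧ G.PrefEdge f} ∧
    Nat.card {p : Fin G.T × Fin 3 // G.SegOnArc e p ∧ G.s' p = true} =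
      Nat.card {f : Fin G.nE // G.SameArc e f ∧ G.NonPrefEdge f} := by
  exact ⟨(G.card_pref h e true).trans (G.card_pref h e false).symm,
    G.card_pref h e true, G.card_nonpref h e true⟩
end
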